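/- arXiv:1409.8060 — 5 statements merged into one kernel-verified Lean document; each statement's English description precedes it below -/
import Mathlib

section
/- Let X be a set and let 𝒟 be a finite directed family of subsets of X. Then the number of distinct traces {A ∈ 𝒟 : x ∈ A}, as x ranges over X, is at most |𝒟| + 1. -/
/-! Every nonempty trace is determined by its smallest member: if `A` is minimal among the
members of a directed family `𝒟` containing `x`, then a member `B` contains `x` iff `A ⊆ B`,
since `B ⊆ A` forces `B = A` and `A ∩ B = ∅` is impossible. So the traces are `∅` together with
the up-sets `{B ∈ 𝒟 : A ⊆ B}` for `A ∈ 𝒟`, at most `|𝒟| + 1` sets. -/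

namespace Set

variable {X : Type*}

/-- What the paper calls a directed family. -/
def IsLaminar (D : Set (Set X)) : Prop :=
  ∀ A ∈ D, ∀ B ∈ D, A ⊆ B ∨ B ⊆ A ∨ A ∩ B = ∅

theorem IsLaminar.trace_eq_of_minimal {D : Set (Set X)} (hD : IsLaminar D) {x : X}
    {A : Set X} (hA : Minimal (· ∈ {B | B ∈ D ∧ x ∈ B}) A) :
    {B | B ∈ D ∧ x ∈ B} = {B | B ∈ D ∧ A ⊆ B} := by
  obtain ⟨hAD, hxA⟩ := hA.prop
  ext B
  refine ⟨fun ⟨hBD, hxB⟩ => ⟨hBD, ?_⟩, fun ⟨hBD, hAB⟩ => ⟨hBD, hAB hxA⟩⟩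
  rcases hD A hAD B hBD with hAB | hBA | hdisj
  · exact hAB
  · exact hA.le_of_le ⟨hBD, hxB⟩ hBA
  · exact absurd (hdisj ▸ mem_inter hxA hxB) (notMem_empty x)

theorem IsLaminar.trace_mem_insert_image {D : Set (Set X)} (hD : IsLaminar D)
    (hfin : D.Finite) (x : X) :
    {B | B ∈ D ∧ x ∈ B} ∈ insert ∅ ((fun A => {B | B ∈ D ∧ A ⊆ B}) '' D) := by
  rcases eq_empty_or_nonempty {B | B ∈ D ∧ x ∈ B} with hempty | hne
  · exact hempty ▸ mem_insert _ _
  · obtain ⟨A, hA⟩ := (hfin.subset fun _ hB => hB.1).exists_minimal hne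
    exact mem_insert_of_mem _ ⟨A, hA.prop.1, (hD.trace_eq_of_minimal hA).symm⟩

theorem IsLaminar.ncard_traces_le {D : Set (Set X)} (hD : IsLaminar D) (hfin : D.Finite) :
    ncard {s | ∃ x : X, s = {A | A ∈ D ∧ x ∈ A}} ≤ D.ncard + 1 := by
  have htraces : {s | ∃ x : X, s = {A | A ∈ D ∧ x ∈ A}} ⊆
      insert ∅ ((fun A => {B | B ∈ D ∧ A ⊆ B}) '' D) := by
    rintro s ⟨x, rfl⟩
    exact hD.trace_mem_insert_image hfin x
  calc ncard {s | ∃ x : X, s = {A | A ∈ D ∧ x ∈ A}}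
      ≤ ncard (insert ∅ ((fun A => {B | B ∈ D ∧ A ⊆ B}) '' D)) :=
        ncard_le_ncard htraces ((hfin.image _).insert _)
    _ ≤ ncard ((fun A => {B | B ∈ D ∧ A ⊆ B}) '' D) + 1 := ncard_insert_le _ _
    _ ≤ D.ncard + 1 := Nat.add_le_add_right (ncard_image_le hfin) 1

end Set

/-- Let `X` be a set and let `𝒟` be a finite directed family of subsets of `X`.
Then the number of distinct traces `{A ∈ 𝒟 : x ∈ A}`, as `x` ranges over `X`, is at most
`|𝒟| + 1`.  A family is *directed* if any two members `A, B` satisfy `A ⊆ B`, `B ⊆ A`, or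
`A ∩ B = ∅`. -/
theorem directed_family_trace_count {X : Type*} (D : Finset (Set X))
    (hdir : ∀ A ∈ D, ∀ B ∈ D, A ⊆ B ∨ B ⊆ A ∨ A ∩ B = ∅) :
    Set.ncard {s : Set (Set X) | ∃ x : X, s = {A : Set X | A ∈ D ∧ x ∈ A}} ≤ D.card + 1 := by
  simpa using Set.IsLaminar.ncard_traces_le (D := (D : Set (Set X))) hdir D.finite_toSet
end

section
/- Let (F, ⊴) be a finite quasi-forest, let ν(t) = {s ∈ F : s ⊴ t} for t ∈ F, let 𝒱(F,⊴) = {ν(t) : t ∈ F} ∪ {∅}, and for t ∈ F let χ(t) = {p ∈ 𝒱(F,⊴) : t ∈ p}. Then there exists a linear order ≤ on 𝒱(F,⊴) such that (i) whenever p ⊊ q (proper inclusion) then p < q, and (ii) for every t ∈ F the set χ(t) is ≤-convex (if p < r < q and p, q ∈ χ(t), then r ∈ χ(t)). -/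
/-!
Rank the points of `F` injectively so that ancestors get larger ranks than their descendants, and
compare sets colexicographically through their ranks: `S < T` when the largest rank in `S ∆ T`
comes from `T`. Proper inclusions are then strict automatically. For convexity it suffices to
treat `ν(t) ≤ v ≤ ν(y)` with `t ⊴ y`, since `ν(t) ⊆ p` for every `p ∈ χ(t)`. If `t ∉ v`, the
element `d` deciding `ν(t) < v` outranks `t`, so it cannot be comparable with `t` inside the chain
`ν(y)`; hence `d ∉ ν(y)`, and the element `e` deciding `v < ν(y)` outranks `d`. But `e ∈ ν(y)` is
comparable with `t`: `e ⊴ t` contradicts the choice of `d`, and `t ⊲ e` gives `e` a smaller rank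
than `t`.
-/

open Function Set Finset.Colex

theorem Finite.exists_injective_strictMono_nat {α : Type*} [Preorder α] [Finite α] :
    ∃ f : α → ℕ, Injective f ∧ StrictMono f := by
  cases nonempty_fintype α
  let n := Fintype.card α
  let idx : α → ℕ := fun a => Fintype.equivFin α a
  have hidx : ∀ a, idx a < n := fun a => (Fintype.equivFin α a).isLt
  refine ⟨fun a => n * (Iic a).ncard + idx a, fun a b hab => ?_, fun a b hab => ?_⟩
  · have : idx a = idx b := by
      simpa [Nat.mul_add_mod, Nat.mod_eq_of_lt (hidx _)] using congrArg (· % n) hab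
    exact (Fintype.equivFin α).injective (Fin.ext this)
  · have hcard : (Iic a).ncard < (Iic b).ncard := ncard_lt_ncard (Iic_ssubset_Iic.2 hab)
    calc n * (Iic a).ncard + idx a < n * ((Iic a).ncard + 1) := by nlinarith [hidx a]
      _ ≤ n * (Iic b).ncard := Nat.mul_le_mul_left n hcard
      _ ≤ n * (Iic b).ncard + idx b := Nat.le_add_right _ _

section ColexKey

variable {α β : Type*} [Finite α] [LinearOrder β] {f : α → β}

noncomputable def colexKey (f : α → β) (S : Set α) : Colex (Finset β) :=
  toColex (S.toFinite.toFinset.image f)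

theorem mem_ofColex_colexKey (hf : Injective f) {S : Set α} {a : α} :
    f a ∈ ofColex (colexKey f S) ↔ a ∈ S := by
  simp [colexKey, hf.eq_iff]

theorem colexKey_injective (hf : Injective f) : Injective (colexKey f) := fun S T h =>
  Set.ext fun a => by rw [← mem_ofColex_colexKey hf, h, mem_ofColex_colexKey hf]

theorem colexKey_strictMono (hf : Injective f) : StrictMono (colexKey f) := fun S T h =>
  toColex_strictMono ((Finset.image_ssubset_image hf).2 (by simpa using h))

theorem colexKey_lt_colexKey (hf : Injective f) {S T : Set α} :
    colexKey f S < colexKey f T ↔ ∃ a ∈ T, a ∉ S ∧ ∀ b ∈ S, b ∉ T → f b < f a := by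
  simp only [colexKey, toColex_lt_toColex_iff_exists_forall_lt, Finset.exists_mem_image,
    Finset.forall_mem_image, hf.mem_finset_image, Set.Finite.mem_toFinset]

end ColexKey

theorem mem_of_colexKey_Iic_le_of_le_colexKey_Iic {α : Type*} [Preorder α] [Finite α]
    (hchain : ∀ y : α, IsChain (· ≤ ·) (Iic y)) {f : α → ℕ} (hf : Injective f)
    (hanti : StrictAnti f) {t y : α} {v : Set α} (hty : t ≤ y)
    (htv : colexKey f (Iic t) ≤ colexKey f v) (hvy : colexKey f v ≤ colexKey f (Iic y)) :
    t ∈ v := by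
  by_contra ht
  have below_y : ∀ x ≤ y, ¬ x ≤ t → f x < f t := fun x hx hxt =>
    hanti ((((hchain y).total hx hty).resolve_left hxt).lt_of_not_ge hxt)
  obtain ⟨d, hdv, hdt, hd⟩ := (colexKey_lt_colexKey hf).1 <|
    htv.lt_of_ne fun h => ht (colexKey_injective hf h ▸ self_mem_Iic)
  have hftd : f t < f d := hd t self_mem_Iic ht
  have hdy : ¬ d ≤ y := fun hdy => (below_y d hdy hdt).not_gt hftd
  obtain ⟨e, hey, hev, he⟩ := (colexKey_lt_colexKey hf).1 <|
    hvy.lt_of_ne fun h => hdy <| by rwa [colexKey_injective hf h] at hdv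
  have hfde : f d < f e := he d hdv hdy
  by_cases het : e ≤ t
  · exact (hd e het hev).not_gt hfde
  · exact (below_y e hey het).not_gt (hftd.trans hfde)

/-- Let `(F, ⊴)` be a finite quasi-forest, `ν(t) = {s : s ⊴ t}`,
`𝒱(F,⊴) = {ν(t) : t ∈ F} ∪ {∅}`, and `χ(t) = {p ∈ 𝒱(F,⊴) : t ∈ p}`.  Then there is a
linear order `≤` on `𝒱(F,⊴)` such that (i) `p ⊊ q` implies `p < q`, and (ii) each `χ(t)`
is `≤`-convex. -/
theorem quasiForest_convex_linear_order {F : Type*} [Fintype F] (r : F → F → Prop)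
    (hrefl : ∀ t, r t t) (htrans : ∀ s t u, r s t → r t u → r s u)
    (hforest : ∀ t s s', r s t → r s' t → r s s' ∨ r s' s) :
    ∃ le : {p : Set F // p ∈ ({S : Set F | ∃ t : F, S = {s : F | r s t}} ∪ {∅})} →
           {p : Set F // p ∈ ({S : Set F | ∃ t : F, S = {s : F | r s t}} ∪ {∅})} → Prop,
      IsLinearOrder _ le ∧
      (∀ p q, p.1 ⊂ q.1 → le p q) ∧
      (∀ t : F, ∀ p q v, le p v → le v q → t ∈ p.1 → t ∈ q.1 → t ∈ v.1) := by
  -- with this preorder, `{s | r s t}` is `Iic t` by definition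
  let _ : Preorder F := { le := r, le_refl := hrefl, le_trans := htrans }
  have hchain : ∀ y : F, IsChain (· ≤ ·) (Iic y) := fun y s hs s' hs' _ => hforest y s s' hs hs'
  obtain ⟨f, hf, hmono⟩ := Finite.exists_injective_strictMono_nat (α := Fᵒᵈ)
  let g : F → ℕ := f ∘ OrderDual.toDual
  have hg : Injective g := hf.comp OrderDual.toDual.injective
  have hanti : StrictAnti g := hmono.dual_left
  have eq_Iic : ∀ (p : Set F) (hp : p ∈ ({S : Set F | ∃ t : F, S = {s : F | r s t}} ∪ {∅})) {t},
      t ∈ p → ∃ x, t ≤ x ∧ p = Iic x := by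
    rintro p (⟨x, rfl⟩ | rfl) t ht
    · exact ⟨x, ht, rfl⟩
    · exact absurd ht (notMem_empty t)
  refine ⟨(· ≤ ·) on (colexKey g ∘ Subtype.val),
    ((colexKey_injective hg).comp Subtype.val_injective).isLinearOrder_onFun _,
    fun p q hpq => (colexKey_strictMono hg hpq).le, ?_⟩
  rintro t ⟨p, hp⟩ ⟨q, hq⟩ v hpv hvq htp htq
  obtain ⟨x, htx, rfl⟩ := eq_Iic p hp htp
  obtain ⟨y, hty, rfl⟩ := eq_Iic q hq htq
  have htp : colexKey g (Iic t) ≤ colexKey g (Iic x) :=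
    (colexKey_strictMono hg).monotone (Iic_subset_Iic.2 htx)
  exact mem_of_colexKey_Iic_le_of_le_colexKey_Iic hchain hg hanti hty (htp.trans hpv) hvq
end

section
/- Let F be a finite set, let 𝒱 be a family of subsets of F, and let ≤ be a linear order on 𝒱 such that for every t ∈ F the set χ(t) = {p ∈ 𝒱 : t ∈ p} is ≤-convex. Then for every strictly increasing sequence p₀ < p₁ < ... < p_m in 𝒱, one has Σ_{i<m} |p_i △ p_{i+1}| ≤ 2|F|, where △ denotes symmetric difference. -/
/-!
For each `t ∈ F` the indices `j` with `t ∈ p j` form an interval of the chain, so `t` lies in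
`p i △ p (i + 1)` for at most two `i`: one where the interval is entered and one where it is
left. Counting the pairs `(i, t)` with `t ∈ p i △ p (i + 1)` in both orders gives the bound.
-/

open Finset

theorem sum_ncard_le_card_mul {ι α : Type*} [Fintype ι] [Fintype α] (s : ι → Set α) {n : ℕ}
    (h : ∀ a, {i | a ∈ s i}.ncard ≤ n) : ∑ i, (s i).ncard ≤ Fintype.card α * n := by
  classical
  calc ∑ i, (s i).ncard = ∑ a, {i | a ∈ s i}.ncard := by
        simp only [Set.ncard_eq_toFinset_card', Set.toFinset_ofPred, card_filter,
          Set.toFinset_card, Fintype.card_subtype]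
        exact sum_comm
    _ ≤ ∑ _a : α, n := sum_le_sum fun a _ ↦ h a
    _ = Fintype.card α * n := by simp

theorem Set.subsingleton_of_forall_lt_notMem {α : Type*} [LinearOrder α] {T : Set α}
    (h : ∀ ⦃a b⦄, a < b → a ∈ T → b ∉ T) : T.Subsingleton :=
  fun _ ha _ hb ↦ le_antisymm (not_lt.1 fun hba ↦ h hba hb ha) (not_lt.1 fun hab ↦ h hab ha hb)

namespace Fin

variable {m : ℕ} {S : Set (Fin (m + 1))}

theorem subsingleton_setOf_notMem_castSucc_mem_succ (hS : S.OrdConnected) :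
    {i : Fin m | i.castSucc ∉ S ∧ i.succ ∈ S}.Subsingleton :=
  Set.subsingleton_of_forall_lt_notMem fun _ b hab ha hb ↦ hb.1 <|
    hS.out ha.2 hb.2 ⟨succ_le_castSucc_iff.mpr hab, castSucc_le_succ b⟩

theorem subsingleton_setOf_mem_castSucc_notMem_succ (hS : S.OrdConnected) :
    {i : Fin m | i.castSucc ∈ S ∧ i.succ ∉ S}.Subsingleton :=
  Set.subsingleton_of_forall_lt_notMem fun a _ hab ha hb ↦ ha.2 <|
    hS.out ha.1 hb.1 ⟨castSucc_le_succ a, succ_le_castSucc_iff.mpr hab⟩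

theorem ncard_setOf_mem_symmDiff_le_two {α : Type*} (s : Fin (m + 1) → Set α) (a : α)
    (hs : {j | a ∈ s j}.OrdConnected) :
    {i : Fin m | a ∈ symmDiff (s i.castSucc) (s i.succ)}.ncard ≤ 2 := by
  have hsplit : {i : Fin m | a ∈ symmDiff (s i.castSucc) (s i.succ)} =
      {i : Fin m | i.castSucc ∈ {j | a ∈ s j} ∧ i.succ ∉ {j | a ∈ s j}} ∪
      {i : Fin m | i.castSucc ∉ {j | a ∈ s j} ∧ i.succ ∈ {j | a ∈ s j}} := by
    ext i
    simp [Set.mem_symmDiff, and_comm]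
  rw [hsplit]
  exact (Set.ncard_union_le _ _).trans <| add_le_add
    (Set.ncard_le_one_iff_subsingleton.2 (subsingleton_setOf_mem_castSucc_notMem_succ hs))
    (Set.ncard_le_one_iff_subsingleton.2 (subsingleton_setOf_notMem_castSucc_mem_succ hs))

end Fin

theorem convex_linear_order_sum_dist_general {F : Type*} [Fintype F] (V : Set (Set F))
    (le : {p : Set F // p ∈ V} → {p : Set F // p ∈ V} → Prop)
    (hconvex : ∀ t : F, ∀ p q v, le p v → le v q → t ∈ p.1 → t ∈ q.1 → t ∈ v.1)
    (m : ℕ) (p : Fin (m + 1) → {p : Set F // p ∈ V})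
    (hmono : ∀ i j : Fin (m + 1), i < j → le (p i) (p j) ∧ p i ≠ p j) :
    ∑ i : Fin m, (symmDiff (p i.castSucc).1 (p i.succ).1).ncard ≤ 2 * Fintype.card F := by
  have hinterval : ∀ t, {j | t ∈ (p j).1}.OrdConnected := fun t ↦ by
    refine ⟨fun i hi j hj k ⟨hik, hkj⟩ ↦ ?_⟩
    rcases hik.eq_or_lt with rfl | hik
    · exact hi
    rcases hkj.eq_or_lt with rfl | hkj
    · exact hj
    exact hconvex t (p i) (p j) (p k) (hmono i k hik).1 (hmono k j hkj).1 hi hj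
  rw [mul_comm]
  exact sum_ncard_le_card_mul _ fun t ↦
    Fin.ncard_setOf_mem_symmDiff_le_two (fun j ↦ (p j).1) t (hinterval t)

/-- Let `F` be a finite set, `𝒱` a family of subsets of `F`, and `≤` a linear
order on `𝒱` such that each `χ(t) = {p ∈ 𝒱 : t ∈ p}` is `≤`-convex.  Then for every
strictly increasing sequence `p₀ < p₁ < ... < p_m` in `𝒱`,
`Σ_{i<m} |p_i △ p_{i+1}| ≤ 2|F|`. -/
theorem convex_linear_order_sum_dist {F : Type*} [Fintype F] (V : Set (Set F))
    (le : {p : Set F // p ∈ V} → {p : Set F // p ∈ V} → Prop)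
    (hlin : IsLinearOrder _ le)
    (hconvex : ∀ t : F, ∀ p q v, le p v → le v q → t ∈ p.1 → t ∈ q.1 → t ∈ v.1)
    (m : ℕ) (p : Fin (m + 1) → {p : Set F // p ∈ V})
    (hmono : ∀ i j : Fin (m + 1), i < j → le (p i) (p j) ∧ p i ≠ p j) :
    ∑ i : Fin m, (symmDiff (p i.castSucc).1 (p i.succ).1).ncard ≤ 2 * Fintype.card F :=
  convex_linear_order_sum_dist_general V le hconvex m p hmono
end

section
/- Let M be an L-structure, let Δ be a finite set of partitioned L-formulas δ(x; z) with x a single variable, and let C ⊆ M^{|z|} be finite. Suppose the family of instances {δ(M; c) : δ ∈ Δ, c ∈ C}, where δ(M;c) = {a ∈ M : M ⊨ δ(a;c)}, is directed. Then the number of realized Δ-types over C in M — that is, the number of distinct functions C × Δ → Prop of the form (c,δ) ↦ (M ⊨ δ(a;c)) as a ranges over M — is at most |Δ|·|C| + 1. -/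
open FirstOrder Language

private lemma exists_min_of_chain {α ι : Type*} (D : ι → Set α) (s : Finset ι)
    (hs : s.Nonempty) (h : ∀ p ∈ s, ∀ q ∈ s, D p ⊆ D q ∨ D q ⊆ D p) :
    ∃ m ∈ s, ∀ q ∈ s, D m ⊆ D q := by
  classical
  induction s using Finset.cons_induction with
  | empty => exact absurd hs (by simp)
  | cons p s hp ih =>
    rcases s.eq_empty_or_nonempty with rfl | hsne
    · exact ⟨p, by simp, by simp⟩
    · obtain ⟨m, hm, hmin⟩ := ih hsne (fun x hx y hy =>
        h x (Finset.mem_cons.2 (Or.inr hx)) y (Finset.mem_cons.2 (Or.inr hy)))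
      rcases h p (Finset.mem_cons_self p s) m (Finset.mem_cons.2 (Or.inr hm)) with hpm | hmp
      · refine ⟨p, Finset.mem_cons_self p s, ?_⟩
        intro q hq
        rcases Finset.mem_cons.1 hq with rfl | hq
        · exact subset_rfl
        · exact hpm.trans (hmin q hq)
      · refine ⟨m, Finset.mem_cons.2 (Or.inr hm), ?_⟩
        intro q hq
        rcases Finset.mem_cons.1 hq with rfl | hq
        · exact hmp
        · exact hmin q hq

/-- Let `M` be an `L`-structure, `Δ` a finite set of partitioned formulas
`δ(x; z)` with `x` a single variable (indexed by the finite type `J`), and `C ⊆ M^{|z|}`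
finite, such that the family of instances `{δ(M;c) : δ ∈ Δ, c ∈ C}` is directed.  Then the
number of realized `Δ`-types over `C` in `M` — distinct functions `C × Δ → Prop` of the
form `(c,δ) ↦ (M ⊨ δ(a;c))` as `a` ranges over `M` — is at most `|Δ|·|C| + 1`. -/
theorem directed_type_count {L : Language} {M : Type*} [L.Structure M] [Nonempty M]
    {J : Type*} [Fintype J] {k : ℕ} (δ : J → L.Formula (Fin 1 ⊕ Fin k))
    (C : Finset (Fin k → M))
    (hdir : ∀ S ∈ {S : Set M | ∃ (j : J), ∃ c ∈ C,
        S = {a : M | (δ j).Realize (Sum.elim (fun _ => a) c)}},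
      ∀ S' ∈ {S : Set M | ∃ (j : J), ∃ c ∈ C,
        S = {a : M | (δ j).Realize (Sum.elim (fun _ => a) c)}},
      S ⊆ S' ∨ S' ⊆ S ∨ S ∩ S' = ∅) :
    Set.ncard {f : {c // c ∈ C} × J → Prop | ∃ a : M,
        f = fun p => (δ p.2).Realize (Sum.elim (fun _ => a) p.1.1)} ≤
      Fintype.card J * C.card + 1 := by
  classical
  set D : ({c // c ∈ C} × J) → Set M :=
    fun p => {a : M | (δ p.2).Realize (Sum.elim (fun _ => a) p.1.1)} with hD
  have hdir' : ∀ p q, D p ⊆ D q ∨ D q ⊆ D p ∨ D p ∩ D q = ∅ := by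
    intro p q
    exact hdir (D p) ⟨p.2, p.1.1, p.1.2, rfl⟩ (D q) ⟨q.2, q.1.1, q.1.2, rfl⟩
  set pat : M → (({c // c ∈ C} × J) → Prop) := fun a p => a ∈ D p with hpat
  have hT : {f : {c // c ∈ C} × J → Prop | ∃ a : M,
      f = fun p => (δ p.2).Realize (Sum.elim (fun _ => a) p.1.1)} = Set.range pat := by
    ext f
    constructor
    · rintro ⟨a, rfl⟩; exact ⟨a, rfl⟩
    · rintro ⟨a, rfl⟩; exact ⟨a, rfl⟩
  -- minimal element
  have hmin : ∀ a : M, (∃ p, a ∈ D p) → ∃ m, a ∈ D m ∧ ∀ q, a ∈ D q → D m ⊆ D q := by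
    intro a ⟨p0, hp0⟩
    have := exists_min_of_chain D (Finset.univ.filter (fun p => a ∈ D p))
      ⟨p0, by simp [hp0]⟩ ?_
    · obtain ⟨m, hm, hmin⟩ := this
      simp only [Finset.mem_filter, Finset.mem_univ, true_and] at hm hmin
      exact ⟨m, hm, fun q hq => hmin q (by simp [hq])⟩
    · intro x hx y hy
      simp only [Finset.mem_filter, Finset.mem_univ, true_and] at hx hy
      rcases hdir' x y with h1 | h1 | h1
      · exact Or.inl h1
      · exact Or.inr h1
      · exact absurd (Set.mem_inter hx hy) (by simp [h1])
  set φ : M → Option ({c // c ∈ C} × J) :=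
    fun a => if h : ∃ p, a ∈ D p then some (hmin a h).choose else none with hφ
  have key : ∀ a b : M, φ a = φ b → pat a = pat b := by
    intro a b hab
    by_cases ha : ∃ p, a ∈ D p
    · by_cases hb : ∃ p, b ∈ D p
      · simp only [hφ, dif_pos ha, dif_pos hb, Option.some.injEq] at hab
        obtain ⟨hma, hmina⟩ := (hmin a ha).choose_spec
        obtain ⟨hmb, hminb⟩ := (hmin b hb).choose_spec
        funext p
        apply propext
        constructor
        · intro h; exact (hab ▸ hmina p h) (hab ▸ hmb)
        · intro h; exact (hab ▸ hminb p h) hma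
      · simp only [hφ, dif_pos ha, dif_neg hb] at hab
        exact (Option.some_ne_none _ hab).elim
    · by_cases hb : ∃ p, b ∈ D p
      · simp only [hφ, dif_neg ha, dif_pos hb] at hab
        exact (Option.some_ne_none _ hab.symm).elim
      · push_neg at ha hb
        funext p
        apply propext
        exact iff_of_false (ha p) (hb p)
  -- injection from range pat into Option
  rw [hT]
  set G : Set.range pat → Option ({c // c ∈ C} × J) :=
    fun f => φ f.2.choose with hG
  have hGinj : Function.Injective G := by
    intro f g hfg
    have h1 := f.2.choose_spec
    have h2 := g.2.choose_spec
    have := key _ _ hfg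
    exact Subtype.ext (h1 ▸ h2 ▸ this)
  have hcard : Nat.card (Set.range pat) ≤ Nat.card (Option ({c // c ∈ C} × J)) :=
    Nat.card_le_card_of_injective G hGinj
  have : Nat.card (Option ({c // c ∈ C} × J)) = Fintype.card J * C.card + 1 := by
    simp [Nat.card_eq_fintype_card, Fintype.card_option, Fintype.card_prod,
      Fintype.card_coe, mul_comm]
  rw [← Nat.card_coe_set_eq]
  exact this ▸ hcard
end

section
/- Let M be an L-structure, let Δ₀ be a finite set of partitioned L-formulas δ(x₀; x₁, y) with x₀, x₁ single variables, and let φ(x₀, x₁; y) be a finite boolean combination of formulas from Δ₀. Suppose that for every a₁ ∈ M the family of instances {δ(M; a₁, b) : δ ∈ Δ₀, b ∈ M^{|y|}} is directed, where δ(M; a₁, b) = {a₀ ∈ M : M ⊨ δ(a₀; a₁, b)}. For δ, δ' ∈ Δ₀ let ψ_{δ,δ'}(x₁; y, y') = ∀x₀ (δ'(x₀; x₁, y') → δ(x₀; x₁, y)), and let Ψ = {ψ_{δ,δ'} : δ, δ' ∈ Δ₀}. Then for every finite B ⊆ M^{|y|}, the number of realized φ-types over B in M (distinct functions b ↦ (M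 ⊨ φ(a₀, a₁; b)) as (a₀,a₁) ranges over M²) is at most (|Δ₀|·|B| + 1) times the number of realized Ψ-types over B × B in M (distinct functions ((b,b'), ψ) ↦ (M ⊨ ψ(a₁; b, b')) as a₁ ranges over M). -/
/-!
A `φ`-type of `(a₀, a₁)` over `B` is determined by its `Δ₀`-type, i.e. by which instances
`δ(M; a₁, b)` with `b ∈ B` contain `a₀`. By directedness, the instances containing `a₀` form a
chain, so they are exactly the instances containing the smallest of them. Hence the `Δ₀`-type is
determined by that smallest instance (one of `|Δ₀|·|B|` choices, or none) together with the
inclusions between instances over `a₁`, and the latter are the `Ψ`-type of `a₁` over `B × B`.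
-/

open FirstOrder Language

/-- Finite boolean combinations of a set of formulas (over a fixed variable type). -/
inductive FormulaBoolComb {L : Language} {α : Type*} (S : Set (L.Formula α)) :
    L.Formula α → Prop
  | base {φ} (h : φ ∈ S) : FormulaBoolComb S φ
  | bot : FormulaBoolComb S ⊥
  | not {φ} (h : FormulaBoolComb S φ) : FormulaBoolComb S φ.not
  | sup {φ ψ} (hφ : FormulaBoolComb S φ) (hψ : FormulaBoolComb S ψ) :
      FormulaBoolComb S (φ ⊔ ψ)

theorem FormulaBoolComb.realize_iff {L : Language} {M : Type*} [L.Structure M] {α : Type*}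
    {S : Set (L.Formula α)} {φ : L.Formula α} (hφ : FormulaBoolComb S φ) {v w : α → M}
    (h : ∀ ψ ∈ S, ψ.Realize v ↔ ψ.Realize w) : φ.Realize v ↔ φ.Realize w := by
  induction hφ with
  | base hψ => exact h _ hψ
  | bot => simp
  | not _ ih => simp [ih]
  | sup _ _ ih₁ ih₂ => simp [ih₁, ih₂]

theorem exists_forall_mem_iff_subset_of_directed {α P : Type*} [Finite P] {S : P → Set α}
    (hS : ∀ p q, S p ⊆ S q ∨ S q ⊆ S p ∨ S p ∩ S q = ∅) (x : α) :
    ∃ m : Option P, ∀ p, x ∈ S p ↔ ∃ q, m = some q ∧ S q ⊆ S p := by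
  by_cases hx : ∃ p, x ∈ S p
  · obtain ⟨q, hqx, hq⟩ :=
      Set.Finite.exists_minimalFor S {p | x ∈ S p} (Set.toFinite _) hx
    refine ⟨some q, fun p => ⟨fun hpx => ⟨q, rfl, ?_⟩, fun ⟨_, hm, hsub⟩ => ?_⟩⟩
    · rcases hS q p with hqp | hpq | hdisj
      · exact hqp
      · exact hq hpx hpq
      · exact absurd hdisj (Set.nonempty_iff_ne_empty.mp ⟨x, hqx, hpx⟩)
    · cases hm
      exact hsub hqx
  · push Not at hx
    exact ⟨none, fun p => by simp [hx p]⟩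

theorem ncard_range_le_card_mul_ncard {X A C D : Type*} [Finite C] {f : X → A}
    (g : X → C) (h : X → D) {T : Set D} (hT : T.Finite) (hhT : ∀ x, h x ∈ T)
    (hf : ∀ x y, g x = g y → h x = h y → f x = f y) :
    (Set.range f).ncard ≤ Nat.card C * T.ncard := by
  have : Finite T := hT.to_subtype
  let e : Set.range f → C × T := fun y => (g y.2.choose, ⟨h y.2.choose, hhT _⟩)
  have he : e.Injective := by
    rintro ⟨y, hy⟩ ⟨y', hy'⟩ hee
    simp only [e, Prod.mk.injEq, Subtype.mk.injEq] at hee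
    have := hf _ _ hee.1 hee.2
    rw [hy.choose_spec, hy'.choose_spec] at this
    exact Subtype.ext this
  calc (Set.range f).ncard = Nat.card (Set.range f) := rfl
    _ ≤ Nat.card (C × T) := Nat.card_le_card_of_injective e he
    _ = Nat.card C * T.ncard := Nat.card_prod _ _

theorem phi_type_count_le_general {L : Language} {M : Type*} [L.Structure M]
    {J : Type*} [Fintype J] {k : ℕ}
    (δ : J → L.Formula (Fin 2 ⊕ Fin k)) (φ : L.Formula (Fin 2 ⊕ Fin k))
    (hφ : FormulaBoolComb (Set.range δ) φ)
    (hdir : ∀ a₁ : M,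
      ∀ S ∈ {S : Set M | ∃ (j : J) (b : Fin k → M),
          S = {a₀ : M | (δ j).Realize (Sum.elim ![a₀, a₁] b)}},
      ∀ S' ∈ {S : Set M | ∃ (j : J) (b : Fin k → M),
          S = {a₀ : M | (δ j).Realize (Sum.elim ![a₀, a₁] b)}},
      S ⊆ S' ∨ S' ⊆ S ∨ S ∩ S' = ∅)
    (B : Finset (Fin k → M)) :
    Set.ncard {f : {b // b ∈ B} → Prop | ∃ a₀ a₁ : M,
        f = fun b => φ.Realize (Sum.elim ![a₀, a₁] b.1)} ≤
      (Fintype.card J * B.card + 1) *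
        Set.ncard {f : ({b // b ∈ B} × {b // b ∈ B}) × (J × J) → Prop | ∃ a₁ : M,
          f = fun q => ∀ a₀ : M,
            (δ q.2.2).Realize (Sum.elim ![a₀, a₁] q.1.2.1) →
              (δ q.2.1).Realize (Sum.elim ![a₀, a₁] q.1.1.1)} := by
  let δSet (a₁ : M) (p : J × B) : Set M := {a₀ | (δ p.1).Realize (Sum.elim ![a₀, a₁] p.2.1)}
  let ψType (a₁ : M) (q : (B × B) × (J × J)) : Prop :=
    δSet a₁ (q.2.2, q.1.2) ⊆ δSet a₁ (q.2.1, q.1.1)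
  choose m hm using fun a : M × M =>
    exists_forall_mem_iff_subset_of_directed
      (fun (p q : J × B) => hdir a.2 _ ⟨p.1, p.2.1, rfl⟩ _ ⟨q.1, q.2.1, rfl⟩) a.1
  have hδType (a : M × M) (j : J) (b : B) :
      (δ j).Realize (Sum.elim ![a.1, a.2] b.1) ↔
        ∃ q, m a = some q ∧ ψType a.2 ((b, q.2), (j, q.1)) :=
    hm a (j, b)
  have hφType : {f : B → Prop | ∃ a₀ a₁ : M, f = fun b => φ.Realize (Sum.elim ![a₀, a₁] b.1)} =
      Set.range fun a : M × M => fun b : B => φ.Realize (Sum.elim ![a.1, a.2] b.1) := by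
    ext; simp [eq_comm]
  have hψType : {f : (B × B) × (J × J) → Prop | ∃ a₁ : M, f = fun q => ∀ a₀ : M,
      (δ q.2.2).Realize (Sum.elim ![a₀, a₁] q.1.2.1) →
        (δ q.2.1).Realize (Sum.elim ![a₀, a₁] q.1.1.1)} = Set.range ψType := by
    ext; simp only [Set.mem_ofPred_eq, Set.mem_range, eq_comm]; rfl
  rw [hφType, hψType]
  calc _ ≤ Nat.card (Option (J × B)) * (Set.range ψType).ncard := by
        refine ncard_range_le_card_mul_ncard m (fun a => ψType a.2) (Set.toFinite _)
          (fun a => Set.mem_range_self a.2) ?_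
        intro a a' hma hψa
        funext b
        refine propext (hφ.realize_iff ?_)
        rintro _ ⟨j, rfl⟩
        rw [hδType, hδType, hma, hψa]
    _ = _ := by simp

/-- Let `M` be an `L`-structure, `Δ₀` a finite set of partitioned formulas
`δ(x₀; x₁, y)` with `x₀, x₁` single variables (indexed by the finite type `J`), and
`φ(x₀,x₁; y)` a finite boolean combination of formulas from `Δ₀`.  Suppose for every
`a₁ ∈ M` the family of instances `{δ(M; a₁, b) : δ ∈ Δ₀, b ∈ M^{|y|}}` is directed.  With
`ψ_{δ,δ'}(x₁; y, y') = ∀x₀ (δ'(x₀; x₁, y') → δ(x₀; x₁, y))` and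
`Ψ = {ψ_{δ,δ'} : δ, δ' ∈ Δ₀}`, for every finite `B ⊆ M^{|y|}` the number of realized
`φ`-types over `B` in `M` is at most `(|Δ₀|·|B| + 1)` times the number of realized
`Ψ`-types over `B × B` in `M`. -/
theorem phi_type_count_le {L : Language} {M : Type*} [L.Structure M] [Nonempty M]
    {J : Type*} [Fintype J] {k : ℕ}
    (δ : J → L.Formula (Fin 2 ⊕ Fin k)) (φ : L.Formula (Fin 2 ⊕ Fin k))
    (hφ : FormulaBoolComb (Set.range δ) φ)
    (hdir : ∀ a₁ : M,
      ∀ S ∈ {S : Set M | ∃ (j : J) (b : Fin k → M),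
          S = {a₀ : M | (δ j).Realize (Sum.elim ![a₀, a₁] b)}},
      ∀ S' ∈ {S : Set M | ∃ (j : J) (b : Fin k → M),
          S = {a₀ : M | (δ j).Realize (Sum.elim ![a₀, a₁] b)}},
      S ⊆ S' ∨ S' ⊆ S ∨ S ∩ S' = ∅)
    (B : Finset (Fin k → M)) :
    Set.ncard {f : {b // b ∈ B} → Prop | ∃ a₀ a₁ : M,
        f = fun b => φ.Realize (Sum.elim ![a₀, a₁] b.1)} ≤
      (Fintype.card J * B.card + 1) *
        Set.ncard {f : ({b // b ∈ B} × {b // b ∈ B}) × (J × J) → Prop | ∃ a₁ : M,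
          f = fun q => ∀ a₀ : M,
            (δ q.2.2).Realize (Sum.elim ![a₀, a₁] q.1.2.1) →
              (δ q.2.1).Realize (Sum.elim ![a₀, a₁] q.1.1.1)} :=
  phi_type_count_le_general δ φ hφ hdir B
end
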